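/- For every integer n ≥ 2, ∑_{k=0}^{n} C(2n-k, n) · k^2 · H_k^{(2)} = [(3n+1)/(2(n-1))] · C(2n+1, n-2) · ( H_{2n+1}^{(2)} - (H_{2n+1} - H_n)(H_{2n+1} - H_n - 2(n+1)(2n-1)/(n(3n+1))) + 2(n^2-n+1)/(n(3n+1)) ). -/

import Mathlib

open Finset

noncomputable def H (n : ℕ) : ℝ := ∑ i ∈ Finset.range n, (1:ℝ)/(i+1)
noncomputable def H2 (n : ℕ) : ℝ := ∑ i ∈ Finset.range n, (1:ℝ)/((i:ℝ)+1)^2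

/-!
Writing `k² C(2n-k, n)` as a combination of `C(2n+r-k, n+r)`, `r = 0, 1, 2`, turns the sum into
a combination of the binomial convolutions `S(a, n) = ∑_{k ≤ n} C(a+n-k, a) H2_k` at
`a = n, n+1, n+2`. These obey Pascal's rule `S(a+1, n+1) = S(a, n+1) + S(a+1, n)`, and so does
`C(a+n, n) T(a, n)` for `T = binomConvH2Ratio`, because `T(0, n) = H2_n` and
`T(a+1, n) = T(a, n) - (H_{a+n} - H_a)/(a+n+1)`; hence `S(a, n) = C(a+n+1, n) T(a+1, n)`.
On the near-diagonal `T` has the closed form `T(n+1, n) = (H2_{2n+1} - (H_{2n+1} - H_n)²)/2`,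
and the other two values needed are one and two steps of the recurrence away.
-/

lemma H_zero : H 0 = 0 := by simp [H]

lemma H_succ (k : ℕ) : H (k + 1) = H k + 1 / ((k : ℝ) + 1) := by
  simp [H, sum_range_succ]

lemma H2_succ (k : ℕ) : H2 (k + 1) = H2 k + 1 / ((k : ℝ) + 1) ^ 2 := by
  simp [H2, sum_range_succ]

noncomputable def binomConvH2 (a n : ℕ) : ℝ :=
  ∑ k ∈ range (n + 1), ((a + n - k).choose a : ℝ) * H2 k

noncomputable def binomConvH2Ratio (a n : ℕ) : ℝ :=
  ∑ i ∈ range n, ((H (a + i + 1) - H a) / ((i : ℝ) + 1) - (H (a + i) - H a) / ((a : ℝ) + i + 1))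

namespace binomConvH2Ratio

lemma zero_left (n : ℕ) : binomConvH2Ratio 0 n = H2 n := by
  refine sum_congr rfl fun i _ => ?_
  simp only [zero_add, Nat.cast_zero, H_zero, sub_zero, H_succ]
  field_simp
  ring

lemma succ_right (a n : ℕ) :
    binomConvH2Ratio a (n + 1) = binomConvH2Ratio a n + (H (a + n + 1) - H a) / ((n : ℝ) + 1)
      - (H (a + n) - H a) / ((a : ℝ) + n + 1) := by
  rw [binomConvH2Ratio, sum_range_succ, ← binomConvH2Ratio]
  ring

lemma succ_left (a n : ℕ) :
    binomConvH2Ratio (a + 1) n = binomConvH2Ratio a n - (H (a + n) - H a) / ((a : ℝ) + n + 1) := by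
  induction n with
  | zero => simp [binomConvH2Ratio]
  | succ n ih =>
    rw [succ_right, succ_right, ih, show a + 1 + n + 1 = a + n + 1 + 1 by ring,
      show a + 1 + n = a + n + 1 by ring, show a + (n + 1) = a + n + 1 by ring,
      H_succ (a + n + 1), H_succ (a + n), H_succ a]
    push_cast
    field_simp
    ring

lemma pascal (a n : ℕ) :
    ((a : ℝ) + n + 2) * binomConvH2Ratio (a + 1) (n + 1)
      = ((a : ℝ) + 1) * binomConvH2Ratio a (n + 1)
        + ((n : ℝ) + 1) * binomConvH2Ratio (a + 1) n := by
  rw [succ_left, succ_left, succ_right a n, show a + (n + 1) = a + n + 1 by ring]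
  push_cast
  field_simp
  ring

lemma succ_self (n : ℕ) :
    binomConvH2Ratio (n + 1) n = (H2 (2 * n + 1) - (H (2 * n + 1) - H n) ^ 2) / 2 := by
  induction n with
  | zero => simp [binomConvH2Ratio, H, H2]
  | succ n ih =>
    rw [succ_left, succ_right, ih, show n + 1 + (n + 1) = 2 * n + 1 + 1 by ring,
      show n + 1 + n + 1 = 2 * n + 1 + 1 by ring, show n + 1 + n = 2 * n + 1 by ring,
      show 2 * (n + 1) + 1 = 2 * n + 1 + 1 + 1 by ring, H_succ (2 * n + 1 + 1), H_succ (2 * n + 1),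
      H2_succ (2 * n + 1 + 1), H2_succ (2 * n + 1), H_succ n]
    push_cast
    field_simp
    ring

end binomConvH2Ratio

lemma sum_range_H2 (n : ℕ) : ∑ k ∈ range n, H2 k = n * H2 n - H n := by
  induction n with
  | zero => simp [H, H2]
  | succ n ih =>
    rw [sum_range_succ, ih, H_succ, H2_succ]
    push_cast
    field_simp
    ring

namespace binomConvH2

lemma zero_left (n : ℕ) : binomConvH2 0 n = ((n : ℝ) + 1) * H2 (n + 1) - H (n + 1) := by
  simp only [binomConvH2, Nat.choose_zero_right, Nat.cast_one, one_mul, sum_range_H2]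
  push_cast
  ring

lemma zero_right (a : ℕ) : binomConvH2 a 0 = 0 := by
  simp [binomConvH2, H2]

lemma pascal (a n : ℕ) :
    binomConvH2 (a + 1) (n + 1) = binomConvH2 a (n + 1) + binomConvH2 (a + 1) n := by
  have hterm : ∀ k ∈ range (n + 1), ((a + 1 + (n + 1) - k).choose (a + 1) : ℝ) * H2 k
      = ((a + (n + 1) - k).choose a : ℝ) * H2 k + ((a + 1 + n - k).choose (a + 1) : ℝ) * H2 k := by
    intro k hk
    have hk : k < n + 1 := mem_range.mp hk
    rw [show a + 1 + (n + 1) - k = (a + n + 1 - k) + 1 by omega,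
      show a + (n + 1) - k = a + n + 1 - k by omega,
      show a + 1 + n - k = a + n + 1 - k by omega, Nat.choose_succ_succ]
    push_cast
    ring
  rw [binomConvH2, binomConvH2, binomConvH2, sum_range_succ,
    sum_range_succ (fun k => ((a + (n + 1) - k).choose a : ℝ) * H2 k), sum_congr rfl hterm,
    sum_add_distrib]
  simp only [Nat.add_sub_cancel, Nat.choose_self]
  ring

lemma eq_choose_mul_ratio (a n : ℕ) :
    binomConvH2 a n = ((a + n + 1).choose n : ℝ) * binomConvH2Ratio (a + 1) n := by
  induction n generalizing a with
  | zero => simp [zero_right, binomConvH2Ratio]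
  | succ n ihn =>
    induction a with
    | zero =>
      rw [zero_left, binomConvH2Ratio.succ_left, binomConvH2Ratio.zero_left, H_zero, zero_add,
        Nat.choose_succ_self_right, H_succ (n + 1), H2_succ (n + 1)]
      push_cast
      field_simp
      ring
    | succ a iha =>
      rw [pascal, iha, ihn (a + 1)]
      have hR := binomConvH2Ratio.pascal (a + 1) n
      have e1 := Nat.choose_mul_succ_eq (a + n + 2) (n + 1)
      have e2 := Nat.add_one_mul_choose_eq (a + n + 2) n
      rw [show a + n + 2 + 1 - (n + 1) = a + 2 by omega] at e1
      rw [show a + (n + 1) + 1 = a + n + 2 by ring, show a + 1 + n + 1 = a + n + 2 by ring,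
        show a + 1 + (n + 1) + 1 = a + n + 2 + 1 by ring]
      have e1' : ((a + n + 2).choose (n + 1) : ℝ) * ((a : ℝ) + n + 3)
          = ((a + n + 2 + 1).choose (n + 1) : ℝ) * ((a : ℝ) + 2) := by exact_mod_cast e1
      have e2' : ((a : ℝ) + n + 3) * ((a + n + 2).choose n : ℝ)
          = ((a + n + 2 + 1).choose (n + 1) : ℝ) * ((n : ℝ) + 1) := by exact_mod_cast e2
      push_cast at hR
      apply mul_left_cancel₀ (show (a : ℝ) + n + 3 ≠ 0 by positivity)
      linear_combination binomConvH2Ratio (a + 1) (n + 1) * e1'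
        + binomConvH2Ratio (a + 1 + 1) n * e2' - ((a + n + 2 + 1).choose (n + 1) : ℝ) * hR

end binomConvH2

lemma sq_mul_choose (m n : ℕ) :
    ((m : ℝ) - 2 * n) ^ 2 * (m.choose n : ℝ) = (2 * (n : ℝ) + 1) ^ 2 * (m.choose n : ℝ)
      - (4 * (n : ℝ) + 3) * ((n : ℝ) + 1) * ((m + 1).choose (n + 1) : ℝ)
      + ((n : ℝ) + 1) * ((n : ℝ) + 2) * ((m + 2).choose (n + 2) : ℝ) := by
  have e1 : ((m : ℝ) + 1) * (m.choose n : ℝ) = ((m + 1).choose (n + 1) : ℝ) * ((n : ℝ) + 1) := by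
    exact_mod_cast Nat.add_one_mul_choose_eq m n
  have e2 : ((m : ℝ) + 2) * ((m + 1).choose (n + 1) : ℝ)
      = ((m + 2).choose (n + 2) : ℝ) * ((n : ℝ) + 2) := by
    exact_mod_cast Nat.add_one_mul_choose_eq (m + 1) (n + 1)
  linear_combination ((n : ℝ) + 1) * e2 - (4 * (n : ℝ) + 1 - m) * e1

lemma sum_choose_mul_sq_mul_H2 (n : ℕ) :
    ∑ k ∈ range (n + 1), ((2 * n - k).choose n : ℝ) * (k : ℝ) ^ 2 * H2 k
      = (2 * (n : ℝ) + 1) ^ 2 * binomConvH2 n n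
        - (4 * (n : ℝ) + 3) * ((n : ℝ) + 1) * binomConvH2 (n + 1) n
        + ((n : ℝ) + 1) * ((n : ℝ) + 2) * binomConvH2 (n + 2) n := by
  rw [binomConvH2, binomConvH2, binomConvH2, mul_sum, mul_sum, mul_sum, ← sum_sub_distrib,
    ← sum_add_distrib]
  refine sum_congr rfl fun k hk => ?_
  have hk : k ≤ n := Nat.lt_succ_iff.mp (mem_range.mp hk)
  have h := sq_mul_choose (2 * n - k) n
  rw [Nat.cast_sub (by omega), show (2 * n - k) + 1 = n + 1 + n - k by omega,
    show (2 * n - k) + 2 = n + 2 + n - k by omega] at h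
  rw [← two_mul]
  push_cast at h
  linear_combination H2 k * h

lemma choose_two_mul_add_two (n : ℕ) :
    ((2 * n + 2).choose n : ℝ)
      = 2 * ((n : ℝ) + 1) / ((n : ℝ) + 2) * ((2 * n + 1).choose n : ℝ) := by
  have h := Nat.choose_mul_succ_eq (2 * n + 1) n
  rw [show 2 * n + 1 + 1 - n = n + 2 by omega] at h
  have h' : ((2 * n + 1).choose n : ℝ) * (2 * (n : ℝ) + 2)
      = ((2 * n + 2).choose n : ℝ) * ((n : ℝ) + 2) := by
    exact_mod_cast h
  field_simp
  linear_combination -h'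

lemma choose_two_mul_add_three (n : ℕ) :
    ((2 * n + 3).choose n : ℝ)
      = (2 * (n : ℝ) + 3) / ((n : ℝ) + 3) * ((2 * n + 2).choose n : ℝ) := by
  have h := Nat.choose_mul_succ_eq (2 * n + 2) n
  rw [show 2 * n + 2 + 1 - n = n + 3 by omega] at h
  have h' : ((2 * n + 2).choose n : ℝ) * (2 * (n : ℝ) + 3)
      = ((2 * n + 3).choose n : ℝ) * ((n : ℝ) + 3) := by
    exact_mod_cast h
  field_simp
  linear_combination -h'

lemma choose_two_mul_add_one_sub_two {n : ℕ} (hn : 2 ≤ n) :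
    ((2 * n + 1).choose (n - 2) : ℝ)
      = (n : ℝ) * ((n : ℝ) - 1) / (((n : ℝ) + 2) * ((n : ℝ) + 3)) * ((2 * n + 1).choose n : ℝ) := by
  have h1 := Nat.choose_succ_right_eq (2 * n + 1) (n - 1)
  have h2 := Nat.choose_succ_right_eq (2 * n + 1) (n - 2)
  rw [show n - 1 + 1 = n by omega, show 2 * n + 1 - (n - 1) = n + 2 by omega] at h1
  rw [show n - 2 + 1 = n - 1 by omega, show 2 * n + 1 - (n - 2) = n + 3 by omega] at h2
  have h1' : ((2 * n + 1).choose n : ℝ) * n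
      = ((2 * n + 1).choose (n - 1) : ℝ) * ((n : ℝ) + 2) := by
    exact_mod_cast h1
  have h2' : ((2 * n + 1).choose (n - 1) : ℝ) * ((n : ℝ) - 1)
      = ((2 * n + 1).choose (n - 2) : ℝ) * ((n : ℝ) + 3) := by
    have := congrArg (Nat.cast (R := ℝ)) h2
    push_cast [Nat.cast_sub (by omega : 1 ≤ n)] at this
    exact this
  field_simp
  linear_combination -((n : ℝ) + 2) * h2' - ((n : ℝ) - 1) * h1'

theorem stmt19 (n : ℕ) (hn : 2 ≤ n) :
    ∑ k ∈ Finset.range (n+1), (((2*n-k).choose n : ℕ) : ℝ) * (k:ℝ)^2 * H2 k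
      = ((3*(n:ℝ)+1)/(2*((n:ℝ)-1))) * (((2*n+1).choose (n-2) : ℕ) : ℝ) *
        (H2 (2*n+1)
          - (H (2*n+1) - H n) *
            (H (2*n+1) - H n - 2*((n:ℝ)+1)*(2*(n:ℝ)-1)/((n:ℝ)*(3*(n:ℝ)+1)))
          + 2*((n:ℝ)^2-(n:ℝ)+1)/((n:ℝ)*(3*(n:ℝ)+1))) := by
  have hn1 : (n : ℝ) - 1 ≠ 0 := sub_ne_zero.mpr (by exact_mod_cast (by omega : n ≠ 1))
  rw [sum_choose_mul_sq_mul_H2, binomConvH2.eq_choose_mul_ratio,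
    binomConvH2.eq_choose_mul_ratio, binomConvH2.eq_choose_mul_ratio,
    binomConvH2Ratio.succ_left (n + 2), binomConvH2Ratio.succ_left (n + 1),
    binomConvH2Ratio.succ_self, show n + n + 1 = 2 * n + 1 by ring,
    show n + 1 + n + 1 = 2 * n + 2 by ring, show n + 2 + n + 1 = 2 * n + 3 by ring,
    show n + 1 + n = 2 * n + 1 by ring, show n + 2 + n = 2 * n + 1 + 1 by ring,
    choose_two_mul_add_three, choose_two_mul_add_two, choose_two_mul_add_one_sub_two hn,
    H_succ (2 * n + 1), show n + 2 = n + 1 + 1 by ring, H_succ (n + 1), H_succ n]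
  push_cast
  field_simp
  ring
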